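/- Let 1 < p < 2 with conjugate p', let (M, μ) be a measure space, and f ∈ L^p(μ; ℝ^N) with f ≠ 0. Define β_k := f·(|f|² + 1/k)^{(p−2)/2}. Then β_k ∈ L^{p'}(μ; ℝ^N) with ‖β_k‖_{p'}^{p'} → ‖f‖_p^p as k → ∞, and ∫ ⟨f, β_k⟩ dμ → ‖f‖_p^p as k → ∞. -/

import Mathlib

/-!
`β_k = (|f|² + ε_k)^{(p-2)/2} f` has `|β_k| ≤ |f|^{p-1}` because the exponent `(p-2)/2` is
nonpositive, and `|β_k| → |f|^{p-1}` pointwise as `ε_k → 0`. Since `(p-1)p' = p`, both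
`|β_k|^{p'}` and `⟨f, β_k⟩ = |β_k| |f|` are dominated by `|f|^p ∈ L¹` and tend to `|f|^p`,
so dominated convergence gives both limits.
-/

open MeasureTheory Filter Topology

/-- A regularisation of the duality map `x ↦ ‖x‖^{p-2} x` of `L^p`; the paper's `β_k` is
`regularizedDualMap p (1/k) ∘ f`. -/
noncomputable def regularizedDualMap {E : Type*} [NormedAddCommGroup E] [NormedSpace ℝ E]
    (p ε : ℝ) (x : E) : E :=
  ((‖x‖ ^ 2 + ε) ^ ((p - 2) / 2)) • x

section Pointwise

variable {p ε : ℝ}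

theorem rpow_sq_mul_self {a : ℝ} (ha : 0 < a) : (a ^ 2) ^ ((p - 2) / 2) * a = a ^ (p - 1) := by
  rw [← Real.rpow_natCast_mul ha.le, ← Real.rpow_add_one ha.ne']
  norm_num
  ring_nf

theorem rpow_sq_add_mul_le {a : ℝ} (hp : p ≤ 2) (ha : 0 ≤ a) (hε : 0 ≤ ε) :
    (a ^ 2 + ε) ^ ((p - 2) / 2) * a ≤ a ^ (p - 1) := by
  rcases ha.eq_or_lt with rfl | ha
  · simpa using Real.rpow_nonneg le_rfl (p - 1)
  calc (a ^ 2 + ε) ^ ((p - 2) / 2) * a ≤ (a ^ 2) ^ ((p - 2) / 2) * a :=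
        mul_le_mul_of_nonneg_right (Real.rpow_le_rpow_of_nonpos (by positivity)
          (le_add_of_nonneg_right hε) (by linarith)) ha.le
    _ = a ^ (p - 1) := rpow_sq_mul_self ha

theorem tendsto_rpow_sq_add_mul {ι : Type*} {l : Filter ι} {ε : ι → ℝ} {a : ℝ} (hp : p ≠ 1)
    (ha : 0 ≤ a) (hε : Tendsto ε l (𝓝 0)) :
    Tendsto (fun i => (a ^ 2 + ε i) ^ ((p - 2) / 2) * a) l (𝓝 (a ^ (p - 1))) := by
  rcases ha.eq_or_lt with rfl | ha
  · simpa [Real.zero_rpow (sub_ne_zero.2 hp)] using tendsto_const_nhds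
  have hbase : Tendsto (fun i => a ^ 2 + ε i) l (𝓝 (a ^ 2)) := by
    simpa using tendsto_const_nhds.add hε
  have hlim := ((Real.continuousAt_rpow_const _ ((p - 2) / 2)
    (Or.inl (by positivity))).tendsto.comp hbase).mul_const a
  rwa [rpow_sq_mul_self ha] at hlim

variable {E : Type*} [NormedAddCommGroup E] [NormedSpace ℝ E]

theorem norm_regularizedDualMap (hε : 0 ≤ ε) (x : E) :
    ‖regularizedDualMap p ε x‖ = (‖x‖ ^ 2 + ε) ^ ((p - 2) / 2) * ‖x‖ := by
  rw [regularizedDualMap, norm_smul, Real.norm_of_nonneg (by positivity)]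

theorem norm_regularizedDualMap_le (hp : p ≤ 2) (hε : 0 ≤ ε) (x : E) :
    ‖regularizedDualMap p ε x‖ ≤ ‖x‖ ^ (p - 1) :=
  norm_regularizedDualMap hε x ▸ rpow_sq_add_mul_le hp (norm_nonneg x) hε

theorem continuous_regularizedDualMap (hε : 0 < ε) :
    Continuous (regularizedDualMap (E := E) p ε) := by
  refine Continuous.smul ?_ continuous_id
  exact continuous_iff_continuousAt.2 fun x =>
    (continuous_norm.pow 2 |>.add continuous_const).continuousAt.rpow_const
      (Or.inl (by dsimp; positivity))

theorem real_inner_regularizedDualMap {F : Type*} [NormedAddCommGroup F] [InnerProductSpace ℝ F]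
    (hε : 0 ≤ ε) (x : F) :
    inner ℝ x (regularizedDualMap p ε x) = ‖regularizedDualMap p ε x‖ * ‖x‖ := by
  rw [norm_regularizedDualMap hε, regularizedDualMap, real_inner_smul_right,
    real_inner_self_eq_norm_sq]
  ring

end Pointwise

section Integral

variable {α E : Type*} [MeasurableSpace α] {μ : Measure α}
  [NormedAddCommGroup E] {f : α → E} {p p' : ℝ}

theorem MeasureTheory.MemLp.norm_rpow_sub_one (hpq : p.HolderConjugate p')
    (hf : MemLp f (.ofReal p) μ) :
    MemLp (fun x => ‖f x‖ ^ (p - 1)) (.ofReal p') μ := by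
  have h := hf.norm_rpow_div (.ofReal (p - 1))
  rwa [ENNReal.toReal_ofReal hpq.sub_one_pos.le, ← ENNReal.ofReal_div_of_pos hpq.sub_one_pos,
    ← hpq.conjugate_eq] at h

theorem MeasureTheory.MemLp.integrable_norm_rpow_ofReal (hp : 0 < p)
    (hf : MemLp f (.ofReal p) μ) :
    Integrable (fun x => ‖f x‖ ^ p) μ := by
  simpa [ENNReal.toReal_ofReal hp.le] using
    hf.integrable_norm_rpow (by simpa using hp) ENNReal.ofReal_ne_top

variable [NormedSpace ℝ E]

theorem memLp_regularizedDualMap (hpq : p.HolderConjugate p') (hp2 : p ≤ 2) {ε : ℝ}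
    (hε : 0 < ε) (hf : MemLp f (.ofReal p) μ) :
    MemLp (fun x => regularizedDualMap p ε (f x)) (.ofReal p') μ :=
  (hf.norm_rpow_sub_one hpq).of_le
    ((continuous_regularizedDualMap hε).comp_aestronglyMeasurable hf.1)
    (.of_forall fun x => (norm_regularizedDualMap_le hp2 hε.le (f x)).trans
      (Real.le_norm_self _))

variable {ε : ℕ → ℝ}

theorem tendsto_integral_norm_regularizedDualMap_rpow (hpq : p.HolderConjugate p')
    (hp2 : p ≤ 2) (hε_pos : ∀ k, 0 < ε k) (hε : Tendsto ε atTop (𝓝 0))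
    (hf : MemLp f (.ofReal p) μ) :
    Tendsto (fun k => ∫ x, ‖regularizedDualMap p (ε k) (f x)‖ ^ p' ∂μ) atTop
      (𝓝 (∫ x, ‖f x‖ ^ p ∂μ)) := by
  have hpow : ∀ a : ℝ, 0 ≤ a → (a ^ (p - 1)) ^ p' = a ^ p := fun a ha => by
    rw [← Real.rpow_mul ha, hpq.sub_one_mul_conj]
  refine tendsto_integral_of_dominated_convergence _
    (fun k => (memLp_regularizedDualMap hpq hp2 (hε_pos k) hf).1.norm.aemeasurable.pow_const
      p' |>.aestronglyMeasurable)
    (hf.integrable_norm_rpow_ofReal hpq.pos) (fun k => .of_forall fun x => ?_)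
    (.of_forall fun x => ?_)
  · rw [Real.norm_of_nonneg (by positivity), ← hpow _ (norm_nonneg _)]
    exact Real.rpow_le_rpow (norm_nonneg _)
      (norm_regularizedDualMap_le hp2 (hε_pos k).le _) hpq.symm.nonneg
  · simp_rw [norm_regularizedDualMap (hε_pos _).le, ← hpow _ (norm_nonneg (f x))]
    exact (tendsto_rpow_sq_add_mul hpq.lt.ne' (norm_nonneg _) hε).rpow_const
      (.inr hpq.symm.nonneg)

theorem tendsto_integral_inner_regularizedDualMap {F : Type*} [NormedAddCommGroup F]
    [InnerProductSpace ℝ F] {g : α → F} (hp1 : 1 < p) (hp2 : p ≤ 2) (hε_pos : ∀ k, 0 < ε k)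
    (hε : Tendsto ε atTop (𝓝 0)) (hg : MemLp g (.ofReal p) μ) :
    Tendsto (fun k => ∫ x, inner ℝ (g x) (regularizedDualMap p (ε k) (g x)) ∂μ) atTop
      (𝓝 (∫ x, ‖g x‖ ^ p ∂μ)) := by
  have hpow : ∀ a : ℝ, 0 ≤ a → a ^ (p - 1) * a = a ^ p := fun a ha => by
    rw [← Real.rpow_add_one' ha (by linarith), sub_add_cancel]
  simp_rw [real_inner_regularizedDualMap (hε_pos _).le]
  refine tendsto_integral_of_dominated_convergence _
    (fun k => ((continuous_regularizedDualMap (hε_pos k)).comp_aestronglyMeasurable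
      hg.1).norm.mul hg.1.norm)
    (hg.integrable_norm_rpow_ofReal (by linarith)) (fun k => .of_forall fun x => ?_)
    (.of_forall fun x => ?_)
  · rw [Real.norm_of_nonneg (by positivity), ← hpow _ (norm_nonneg _)]
    exact mul_le_mul_of_nonneg_right (norm_regularizedDualMap_le hp2 (hε_pos k).le _)
      (norm_nonneg _)
  · simp_rw [norm_regularizedDualMap (hε_pos _).le, ← hpow _ (norm_nonneg (g x))]
    exact (tendsto_rpow_sq_add_mul hp1.ne' (norm_nonneg _) hε).mul_const _

end Integral

theorem duality_test_functions_general {α : Type*} [MeasurableSpace α] (μ : Measure α)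
    {N : ℕ} (p p' : ℝ) (hp1 : 1 < p) (hp2 : p < 2) (hconj : 1 / p + 1 / p' = 1)
    (f : α → EuclideanSpace ℝ (Fin N))
    (hf : MemLp f (ENNReal.ofReal p) μ) :
    (∀ k : ℕ, MemLp
        (fun x => ((‖f x‖ ^ 2 + 1 / ((k : ℝ) + 1)) ^ ((p - 2) / 2)) • f x)
        (ENNReal.ofReal p') μ) ∧
    Tendsto (fun k : ℕ =>
        ∫ x, ‖((‖f x‖ ^ 2 + 1 / ((k : ℝ) + 1)) ^ ((p - 2) / 2)) • f x‖ ^ p' ∂μ)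
      atTop (nhds (∫ x, ‖f x‖ ^ p ∂μ)) ∧
    Tendsto (fun k : ℕ =>
        ∫ x, (inner ℝ (f x)
          (((‖f x‖ ^ 2 + 1 / ((k : ℝ) + 1)) ^ ((p - 2) / 2)) • f x) : ℝ) ∂μ)
      atTop (nhds (∫ x, ‖f x‖ ^ p ∂μ)) := by
  have hpq : p.HolderConjugate p' := Real.holderConjugate_iff.2 ⟨hp1, by simpa using hconj⟩
  have hε_pos (k : ℕ) : 0 < 1 / ((k : ℝ) + 1) := by positivity
  exact ⟨fun k => memLp_regularizedDualMap hpq hp2.le (hε_pos k) hf,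
    tendsto_integral_norm_regularizedDualMap_rpow hpq hp2.le hε_pos
      tendsto_one_div_add_atTop_nhds_zero_nat hf,
    tendsto_integral_inner_regularizedDualMap hp1 hp2.le hε_pos
      tendsto_one_div_add_atTop_nhds_zero_nat hf⟩

/-- Key computational lemma of the duality argument: with `1 < p < 2`, `p'` conjugate,
`f ∈ L^p(μ; ℝ^N)` nonzero, and `β_k := (|f|² + 1/k)^{(p−2)/2} f`, each `β_k ∈ L^{p'}`,
`‖β_k‖_{p'}^{p'} → ‖f‖_p^p` and `∫⟨f, β_k⟩ → ‖f‖_p^p`. -/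
theorem duality_test_functions {α : Type*} [MeasurableSpace α] (μ : Measure α)
    {N : ℕ} (p p' : ℝ) (hp1 : 1 < p) (hp2 : p < 2) (hconj : 1 / p + 1 / p' = 1)
    (f : α → EuclideanSpace ℝ (Fin N))
    (hf : MemLp f (ENNReal.ofReal p) μ) (hfne : ¬ f =ᵐ[μ] 0) :
    (∀ k : ℕ, MemLp
        (fun x => ((‖f x‖ ^ 2 + 1 / ((k : ℝ) + 1)) ^ ((p - 2) / 2)) • f x)
        (ENNReal.ofReal p') μ) ∧
    Tendsto (fun k : ℕ =>
        ∫ x, ‖((‖f x‖ ^ 2 + 1 / ((k : ℝ) + 1)) ^ ((p - 2) / 2)) • f x‖ ^ p' ∂μ)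
      atTop (nhds (∫ x, ‖f x‖ ^ p ∂μ)) ∧
    Tendsto (fun k : ℕ =>
        ∫ x, (inner ℝ (f x)
          (((‖f x‖ ^ 2 + 1 / ((k : ℝ) + 1)) ^ ((p - 2) / 2)) • f x) : ℝ) ∂μ)
      atTop (nhds (∫ x, ‖f x‖ ^ p ∂μ)) :=
  duality_test_functions_general μ p p' hp1 hp2 hconj f hf
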